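/- arXiv:2106.14378 — 6 statements merged into one kernel-verified Lean document; each statement's English description precedes it below -/
import Mathlib

section
/- For every left-order < on the additive group ℤ² there exists a nonzero ℝ-linear functional φ : ℝ² → ℝ such that every x ∈ ℤ² with φ(x) > 0 satisfies 0 < x and every x ∈ ℤ² with φ(x) < 0 satisfies x < 0. Moreover the line ker φ ⊂ ℝ² is uniquely determined by the order: if φ' is another nonzero linear functional with this property, then ker φ' = ker φ. -/
/-!
The strictly positive elements of the order form a cone `P ⊆ ℤ²`: closed under addition, and
containing exactly one of `x`, `-x` for every `x ≠ 0`. It suffices to find `φ ≠ 0` with `φ ≥ 0`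
on `P`, because then `φ x > 0` forces `x ∈ P` (otherwise `-x ∈ P`). After replacing `P` by `-P`
we may assume `(0, 1) ∈ P`; then the slopes `m / n` of the points `(n, m) ∈ P` with `n > 0`
form an upward closed set, and `φ (n, m) = m - c n` with `c` its infimum works (`φ = ± n` when
that set is empty or unbounded below).

If two such functionals had different kernels, the open cone `{φ > 0, φ' < 0}` would be
nonempty, hence would contain a lattice point, which would be both positive and negative.
-/

def latticeCast : ℤ × ℤ →+ ℝ × ℝ := (Int.castAddHom ℝ).prodMap (Int.castAddHom ℝ)

@[simp]
theorem latticeCast_apply (x : ℤ × ℤ) : latticeCast x = ((x.1 : ℝ), (x.2 : ℝ)) := rfl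

theorem exists_latticeCast_mem_of_isOpen {U : Set (ℝ × ℝ)} (hU : IsOpen U) (hne : U.Nonempty)
    (hsmul : ∀ t : ℝ, 0 < t → ∀ v ∈ U, t • v ∈ U) : ∃ x : ℤ × ℤ, latticeCast x ∈ U := by
  obtain ⟨q, hq⟩ := (Rat.denseRange_cast.prodMap Rat.denseRange_cast).exists_mem_open hU hne
  -- the rational point `q` with its denominators cleared
  refine ⟨(q.1.num * q.2.den, q.2.num * q.1.den), ?_⟩
  convert hsmul (q.1.den * q.2.den) (by positivity) _ hq using 1
  simp only [latticeCast_apply, Prod.map, Prod.smul_mk, smul_eq_mul, Rat.cast_def]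
  push_cast
  ext <;> field_simp

theorem exists_latticeCast_pos_neg {φ ψ : ℝ × ℝ →ₗ[ℝ] ℝ} (h : ∃ v, 0 < φ v ∧ ψ v < 0) :
    ∃ x : ℤ × ℤ, 0 < φ (latticeCast x) ∧ ψ (latticeCast x) < 0 :=
  exists_latticeCast_mem_of_isOpen
    ((isOpen_lt continuous_const φ.continuous_of_finiteDimensional).inter
      (isOpen_lt ψ.continuous_of_finiteDimensional continuous_const)) h
    fun t ht _ ⟨hφ, hψ⟩ =>
      ⟨by simpa using mul_pos ht hφ, by simpa using mul_neg_of_pos_of_neg ht hψ⟩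

theorem LinearMap.exists_pos_neg_of_not_ker_le {E : Type*} [AddCommGroup E] [Module ℝ E]
    {f g : E →ₗ[ℝ] ℝ} (hf : f ≠ 0) (h : ¬ LinearMap.ker f ≤ LinearMap.ker g) :
    ∃ v, 0 < f v ∧ g v < 0 := by
  obtain ⟨u, hfu, hgu⟩ := Set.not_subset.mp h
  obtain ⟨w, hw⟩ := DFunLike.ne_iff.mp hf
  rw [SetLike.mem_coe, LinearMap.mem_ker] at hfu hgu
  rw [LinearMap.zero_apply] at hw
  -- `f (f w • w) > 0`, and adding a suitable multiple of `u ∈ ker f` makes `g` negative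
  refine ⟨(g u ^ 2) • (f w • w) - (g u * (g (f w • w) + 1)) • u, ?_, ?_⟩
  · simp only [map_sub, map_smul, smul_eq_mul, hfu, mul_zero, sub_zero]
    exact mul_pos (sq_pos_of_ne_zero hgu) (mul_self_pos.mpr hw)
  · simp only [map_sub, map_smul, smul_eq_mul]
    nlinarith [sq_pos_of_ne_zero hgu]

theorem LinearMap.ker_eq_ker_of_not_exists_pos_neg {E : Type*} [AddCommGroup E] [Module ℝ E]
    {f g : E →ₗ[ℝ] ℝ} (hf : f ≠ 0) (hg : g ≠ 0) (h : ¬ ∃ v, 0 < f v ∧ g v < 0) :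
    LinearMap.ker g = LinearMap.ker f := by
  refine le_antisymm (not_not.mp fun hgf => h ?_) (not_not.mp fun hfg => h ?_)
  · obtain ⟨v, hgv, hfv⟩ := exists_pos_neg_of_not_ker_le (g := -f) (neg_ne_zero.mpr hg)
      (by simpa only [LinearMap.ker_neg] using hgf)
    exact ⟨v, by simpa using hfv, by simpa using hgv⟩
  · exact exists_pos_neg_of_not_ker_le hf hfg

structure IsStrictPositiveCone {G : Type*} [AddCommGroup G] (P : Set G) : Prop where
  add_mem {x y : G} : x ∈ P → y ∈ P → x + y ∈ P
  zero_notMem : (0 : G) ∉ P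
  mem_or_neg_mem {x : G} : x ≠ 0 → x ∈ P ∨ -x ∈ P

namespace IsStrictPositiveCone

variable {G : Type*} [AddCommGroup G] {P : Set G} (hP : IsStrictPositiveCone P)
include hP

theorem neg_notMem {x : G} (hx : x ∈ P) : -x ∉ P := fun hnx =>
  hP.zero_notMem (by simpa using hP.add_mem hx hnx)

theorem nsmul_mem {x : G} (hx : x ∈ P) {n : ℕ} (hn : n ≠ 0) : n • x ∈ P := by
  induction n with
  | zero => contradiction
  | succ n ih =>
    rcases eq_or_ne n 0 with rfl | hn
    · simpa using hx
    · rw [succ_nsmul]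
      exact hP.add_mem (ih hn) hx

theorem zsmul_mem {x : G} (hx : x ∈ P) {k : ℤ} (hk : 0 < k) : k • x ∈ P := by
  lift k to ℕ using hk.le
  rw [natCast_zsmul]
  exact hP.nsmul_mem hx (by omega)

theorem mem_of_zsmul_mem {x : G} {k : ℤ} (hk : 0 < k) (hkx : k • x ∈ P) : x ∈ P := by
  have hx : x ≠ 0 := by
    rintro rfl
    exact hP.zero_notMem (by simpa using hkx)
  refine (hP.mem_or_neg_mem hx).resolve_right fun hnx => hP.neg_notMem hkx ?_
  simpa using hP.zsmul_mem hnx hk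

theorem neg : IsStrictPositiveCone (-P) where
  add_mem hx hy := Set.mem_neg.mpr (by rw [neg_add]; exact hP.add_mem hx hy)
  zero_notMem := by simpa using hP.zero_notMem
  mem_or_neg_mem hx := by simpa [or_comm] using hP.mem_or_neg_mem hx

theorem mem_of_pos {f : G →+ ℝ} (hf : ∀ x ∈ P, 0 ≤ f x) {x : G} (hx : 0 < f x) : x ∈ P := by
  have hx0 : x ≠ 0 := by
    rintro rfl
    simp at hx
  refine (hP.mem_or_neg_mem hx0).resolve_right fun hnx => ?_
  linarith [hf _ hnx, map_neg f x]

end IsStrictPositiveCone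

theorem isStrictPositiveCone_of_leftOrder {G : Type*} [AddCommGroup G] {r : G → G → Prop}
    (hord : IsStrictTotalOrder G r) (hinv : ∀ g a b : G, r a b → r (g + a) (g + b)) :
    IsStrictPositiveCone {x | r 0 x} where
  add_mem {x y} hx hy := hord.trans _ _ _ hx (by simpa using hinv x 0 y hy)
  zero_notMem := hord.irrefl 0
  mem_or_neg_mem {x} hx := by
    refine or_iff_not_imp_left.mpr fun h0x => ?_
    have hx0 : r x 0 := by_contra fun h => hx (hord.trichotomous 0 x h0x h).symm
    simpa using hinv (-x) x 0 hx0

def slopes (P : Set (ℤ × ℤ)) : Set ℝ := (fun x : ℤ × ℤ => (x.2 : ℝ) / x.1) '' {x ∈ P | 0 < x.1}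

namespace IsStrictPositiveCone

variable {P : Set (ℤ × ℤ)} (hP : IsStrictPositiveCone P)

section MemZeroOne

variable (h01 : ((0 : ℤ), (1 : ℤ)) ∈ P)
include hP h01

theorem mem_of_slope_lt {x y : ℤ × ℤ} (hx : x ∈ P) (hx1 : 0 < x.1) (hy1 : 0 < y.1)
    (hlt : x.2 * y.1 < y.2 * x.1) : y ∈ P := by
  refine hP.mem_of_zsmul_mem hx1 ?_
  have : x.1 • y = y.1 • x + (y.2 * x.1 - x.2 * y.1) • ((0 : ℤ), (1 : ℤ)) := by
    ext <;> simp <;> ring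
  rw [this]
  exact hP.add_mem (hP.zsmul_mem hx hy1) (hP.zsmul_mem h01 (by linarith))

theorem pos_of_mem_vertical {m : ℤ} (hm : ((0 : ℤ), m) ∈ P) : 0 < m := by
  by_contra! h
  rcases h.lt_or_eq with h | rfl
  · exact hP.neg_notMem hm (by simpa using hP.zsmul_mem h01 (neg_pos.mpr h))
  · exact hP.zero_notMem hm

theorem slope_le_of_fst_neg {x : ℤ × ℤ} (hx : x ∈ P) (hx1 : x.1 < 0) {s : ℝ} (hs : s ∈ slopes P) :
    (x.2 : ℝ) / x.1 ≤ s := by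
  obtain ⟨y, ⟨hy, hy1⟩, rfl⟩ := hs
  by_contra! hlt
  refine hP.neg_notMem hx (hP.mem_of_slope_lt h01 hy hy1 (neg_pos.mpr hx1) ?_)
  rw [← neg_div_neg_eq (x.2 : ℝ),
    div_lt_div_iff₀ (by exact_mod_cast hy1) (by exact_mod_cast neg_pos.mpr hx1)] at hlt
  simp only [Prod.fst_neg, Prod.snd_neg]
  exact_mod_cast hlt

theorem exists_nonneg_of_mem_zero_one :
    ∃ φ : ℝ × ℝ →ₗ[ℝ] ℝ, φ ≠ 0 ∧ ∀ x ∈ P, 0 ≤ φ (latticeCast x) := by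
  by_cases hne : (slopes P).Nonempty
  · by_cases hbdd : BddBelow (slopes P)
    · refine ⟨.snd ℝ ℝ ℝ - sInf (slopes P) • .fst ℝ ℝ ℝ,
        fun h => by simpa using LinearMap.congr_fun h (0, 1), ?_⟩
      rintro ⟨n, m⟩ hx
      simp only [latticeCast_apply, LinearMap.sub_apply, LinearMap.smul_apply,
        LinearMap.snd_apply, LinearMap.fst_apply, smul_eq_mul, sub_nonneg]
      rcases lt_trichotomy n 0 with hn | rfl | hn
      · have := le_csInf hne fun s => hP.slope_le_of_fst_neg h01 hx hn
        rwa [div_le_iff_of_neg (by exact_mod_cast hn)] at this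
      · simpa using (hP.pos_of_mem_vertical h01 hx).le
      · have := csInf_le hbdd ⟨(n, m), ⟨hx, hn⟩, rfl⟩
        rwa [le_div_iff₀ (by exact_mod_cast hn)] at this
    · refine ⟨.fst ℝ ℝ ℝ, fun h => by simpa using LinearMap.congr_fun h (1, 0), fun x hx => ?_⟩
      by_contra! hx1
      exact hbdd ⟨_, fun s => hP.slope_le_of_fst_neg h01 hx (by simpa using hx1)⟩
  · refine ⟨-.fst ℝ ℝ ℝ, fun h => by simpa using LinearMap.congr_fun h (1, 0), fun x hx => ?_⟩
    by_contra! hx1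
    exact hne ⟨_, x, ⟨hx, by simpa using hx1⟩, rfl⟩

end MemZeroOne

include hP

theorem exists_nonneg : ∃ φ : ℝ × ℝ →ₗ[ℝ] ℝ, φ ≠ 0 ∧ ∀ x ∈ P, 0 ≤ φ (latticeCast x) := by
  rcases hP.mem_or_neg_mem (x := ((0 : ℤ), (1 : ℤ))) (by simp) with h01 | h01
  · exact hP.exists_nonneg_of_mem_zero_one h01
  · obtain ⟨φ, hφ, hφP⟩ := hP.neg.exists_nonneg_of_mem_zero_one (Set.mem_neg.mpr h01)
    refine ⟨-φ, neg_ne_zero.mpr hφ, fun x hx => ?_⟩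
    simpa only [map_neg, LinearMap.neg_apply, neg_nonneg] using
      hφP (-x) (Set.mem_neg.mpr (by simpa using hx))

end IsStrictPositiveCone

/-- For every left-order on the additive group ℤ² there exists a nonzero ℝ-linear
functional φ : ℝ² → ℝ detecting the order on lattice points, and its kernel line is
uniquely determined by the order. -/
theorem stmt_0 (r : ℤ × ℤ → ℤ × ℤ → Prop)
    (hord : IsStrictTotalOrder (ℤ × ℤ) r)
    (hinv : ∀ g a b : ℤ × ℤ, r a b → r (g + a) (g + b)) :
    ∃ φ : ℝ × ℝ →ₗ[ℝ] ℝ, φ ≠ 0 ∧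
      (∀ x : ℤ × ℤ, 0 < φ ((x.1 : ℝ), (x.2 : ℝ)) → r 0 x) ∧
      (∀ x : ℤ × ℤ, φ ((x.1 : ℝ), (x.2 : ℝ)) < 0 → r x 0) ∧
      ∀ φ' : ℝ × ℝ →ₗ[ℝ] ℝ, φ' ≠ 0 →
        (∀ x : ℤ × ℤ, 0 < φ' ((x.1 : ℝ), (x.2 : ℝ)) → r 0 x) →
        (∀ x : ℤ × ℤ, φ' ((x.1 : ℝ), (x.2 : ℝ)) < 0 → r x 0) →
        LinearMap.ker φ' = LinearMap.ker φ := by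
  have hP := isStrictPositiveCone_of_leftOrder hord hinv
  obtain ⟨φ, hφ, hφP⟩ := hP.exists_nonneg
  have pos (x : ℤ × ℤ) : 0 < φ (latticeCast x) → r 0 x :=
    hP.mem_of_pos (f := φ.toAddMonoidHom.comp latticeCast) hφP
  have neg (x : ℤ × ℤ) (hx : φ (latticeCast x) < 0) : r x 0 := by
    simpa using hinv x 0 (-x) (pos (-x) (by rwa [map_neg, map_neg, neg_pos]))
  refine ⟨φ, hφ, pos, neg, fun φ' hφ' _ hneg' => ?_⟩
  refine LinearMap.ker_eq_ker_of_not_exists_pos_neg hφ hφ' fun hv => ?_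
  obtain ⟨x, hx, hx'⟩ := exists_latticeCast_pos_neg hv
  exact hord.irrefl 0 (hord.trans _ _ _ (pos x hx) (hneg' x hx'))
end

section
/- Let < be a left-order on the additive group ℤ² and let φ : ℝ² → ℝ be a nonzero linear functional such that every x ∈ ℤ² with φ(x) > 0 satisfies 0 < x and every x ∈ ℤ² with φ(x) < 0 satisfies x < 0. Then: (i) every x ∈ ℤ² with φ(x) ≠ 0 is <-cofinal; (ii) no element x ∈ ℤ² with φ(x) = 0 is <-cofinal; (iii) the subgroup ℤ² ∩ ker φ is <-convex. -/
/-- Given a left-order on ℤ² and a nonzero linear functional φ detecting it: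
(i) every lattice point with φ(x) ≠ 0 is cofinal; (ii) no lattice point with
φ(x) = 0 is cofinal; (iii) the subgroup ℤ² ∩ ker φ is convex. -/
theorem stmt_1 (r : ℤ × ℤ → ℤ × ℤ → Prop)
    (hord : IsStrictTotalOrder (ℤ × ℤ) r)
    (hinv : ∀ g a b : ℤ × ℤ, r a b → r (g + a) (g + b))
    (φ : ℝ × ℝ →ₗ[ℝ] ℝ) (hφ : φ ≠ 0)
    (hpos : ∀ x : ℤ × ℤ, 0 < φ ((x.1 : ℝ), (x.2 : ℝ)) → r 0 x)
    (hneg : ∀ x : ℤ × ℤ, φ ((x.1 : ℝ), (x.2 : ℝ)) < 0 → r x 0) :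
    (∀ x : ℤ × ℤ, φ ((x.1 : ℝ), (x.2 : ℝ)) ≠ 0 →
      ∀ h : ℤ × ℤ, ∃ m n : ℤ,
        (r (m • x) h ∨ m • x = h) ∧ (r h (n • x) ∨ h = n • x)) ∧
    (∀ x : ℤ × ℤ, φ ((x.1 : ℝ), (x.2 : ℝ)) = 0 →
      ¬ ∀ h : ℤ × ℤ, ∃ m n : ℤ,
        (r (m • x) h ∨ m • x = h) ∧ (r h (n • x) ∨ h = n • x)) ∧
    (∀ k h x : ℤ × ℤ, φ ((k.1 : ℝ), (k.2 : ℝ)) = 0 → φ ((h.1 : ℝ), (h.2 : ℝ)) = 0 →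
      r k x → r x h → φ ((x.1 : ℝ), (x.2 : ℝ)) = 0) := by
  have asymm : ∀ a b : ℤ × ℤ, r a b → r b a → False := fun a b h1 h2 =>
    hord.irrefl a (hord.trans a b a h1 h2)
  set f : ℤ × ℤ → ℝ := fun x => φ ((x.1 : ℝ), (x.2 : ℝ)) with hfdef
  have fsub : ∀ a b : ℤ × ℤ, f (a - b) = f a - f b := by
    intro a b
    have e : (((a - b).1 : ℝ), ((a - b).2 : ℝ))
        = ((a.1 : ℝ), (a.2 : ℝ)) - ((b.1 : ℝ), (b.2 : ℝ)) := by
      simp [Prod.ext_iff]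
    simp only [hfdef, e, map_sub]
  have f0 : f 0 = 0 := by
    have : ((((0 : ℤ × ℤ).1 : ℝ)), (((0 : ℤ × ℤ).2 : ℝ))) = (0 : ℝ × ℝ) := by
      simp [Prod.ext_iff]
    simp only [hfdef, this, map_zero]
  have fneg : ∀ a : ℤ × ℤ, f (-a) = - f a := by
    intro a
    have := fsub 0 a
    simpa [f0] using this
  have fsmul : ∀ (n : ℤ) (x : ℤ × ℤ), f (n • x) = n * f x := by
    intro n x
    have e : (((n • x).1 : ℝ), ((n • x).2 : ℝ)) = (n : ℝ) • ((x.1 : ℝ), (x.2 : ℝ)) := by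
      simp [Prod.ext_iff, Prod.smul_def]
    simp only [hfdef, e, map_smul, smul_eq_mul]
  have A : ∀ a b : ℤ × ℤ, 0 < f (b - a) → r a b := by
    intro a b hb
    have h := hinv a _ _ (hpos _ hb)
    have e : a + (b - a) = b := by abel
    rwa [add_zero, e] at h
  have B : ∀ a b : ℤ × ℤ, f (b - a) < 0 → r b a := by
    intro a b hb
    have h := hinv a _ _ (hneg _ hb)
    have e : a + (b - a) = b := by abel
    rwa [add_zero, e] at h
  have key : ∀ c d : ℝ, c ≠ 0 → ∃ n : ℤ, d < n * c := by
    intro c d hc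
    have hd : d / c * c = d := div_mul_cancel₀ d hc
    rcases hc.lt_or_gt with h | h
    · obtain ⟨n, hn⟩ := exists_int_lt (d / c)
      exact ⟨n, by nlinarith⟩
    · obtain ⟨n, hn⟩ := exists_int_gt (d / c)
      exact ⟨n, by nlinarith⟩
  refine ⟨?_, ?_, ?_⟩
  · intro x hx h
    obtain ⟨n, hn⟩ := key (f x) (f h) hx
    obtain ⟨m, hm⟩ := key (-(f x)) (-(f h)) (by simpa using hx)
    refine ⟨m, n, Or.inl (A _ _ ?_), Or.inl (A _ _ ?_)⟩
    · rw [fsub, fsmul]; nlinarith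
    · rw [fsub, fsmul]; nlinarith
  · intro x hx hcof
    have hy : ∃ y : ℤ × ℤ, 0 < f y := by
      have h10 : f (1, 0) ≠ 0 ∨ f (0, 1) ≠ 0 := by
        by_contra hcon
        push_neg at hcon
        apply hφ
        apply LinearMap.ext
        intro v
        have hv : v = v.1 • ((1:ℝ), (0:ℝ)) + v.2 • ((0:ℝ), (1:ℝ)) := by
          simp [Prod.ext_iff]
        have e1 : φ ((1:ℝ), (0:ℝ)) = 0 := by simpa [hfdef] using hcon.1
        have e2 : φ ((0:ℝ), (1:ℝ)) = 0 := by simpa [hfdef] using hcon.2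
        rw [hv, map_add, map_smul, map_smul, e1, e2]
        simp
      rcases h10 with h' | h'
      · rcases h'.lt_or_gt with h'' | h''
        · exact ⟨-(1, 0), by rw [fneg]; linarith⟩
        · exact ⟨(1, 0), h''⟩
      · rcases h'.lt_or_gt with h'' | h''
        · exact ⟨-(0, 1), by rw [fneg]; linarith⟩
        · exact ⟨(0, 1), h''⟩
    obtain ⟨y, hy⟩ := hy
    obtain ⟨m, n, _, h2⟩ := hcof y
    have hnx : f (n • x) = 0 := by rw [fsmul, show f x = 0 from hx]; ring
    rcases h2 with h2 | h2
    · have h3 : r (n • x) y := A _ _ (by rw [fsub, hnx]; linarith)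
      exact asymm _ _ h2 h3
    · rw [h2, hnx] at hy
      exact lt_irrefl _ hy
  · intro k h x hk hh hkx hxh
    rcases lt_trichotomy (f x) 0 with hfx | hfx | hfx
    · exact absurd (B k x (by rw [fsub, show f k = 0 from hk]; linarith)) (fun hc => asymm _ _ hkx hc)
    · exact hfx
    · exact absurd (A h x (by rw [fsub, show f h = 0 from hh]; linarith)) (fun hc => asymm _ _ hxh hc)
end

section
/- Let G be a group equipped with a left-order < and let β ∈ G be <-cofinal with 1 < β. Then 1 < γ·β·γ⁻¹ for every γ ∈ G. -/
/-!
If `γ β γ⁻¹ < 1`, then `γ β^k γ⁻¹ = (γ β γ⁻¹)^k < 1`, so left multiplication by `γ⁻¹` gives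
`β^k γ⁻¹ < γ⁻¹` for every `k ≥ 1`. Squeezing `γ⁻¹` between powers `β^m ≤ γ⁻¹ ≤ β^n` gives
`β^(k+m) ≤ β^k γ⁻¹ < γ⁻¹ ≤ β^n` for all `k ≥ 1`, which is absurd because `k ↦ β^k` is
strictly increasing when `1 < β`.
-/

section LeftOrderedGroup

variable {G : Type*} [Group G] [LinearOrder G] [MulLeftMono G] {β : G}

lemma zpow_right_strictMono_of_one_lt (hβ : 1 < β) : StrictMono fun n : ℤ ↦ β ^ n :=
  strictMono_int_of_lt_succ fun n ↦ by
    simpa only [zpow_add_one] using lt_mul_of_one_lt_right' (β ^ n) hβ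

lemma pow_mul_inv_lt_inv_of_conj_lt_one {γ : G} (h : γ * β * γ⁻¹ < 1) {k : ℕ} (hk : k ≠ 0) :
    β ^ k * γ⁻¹ < γ⁻¹ := by
  have hconj : γ * β ^ k * γ⁻¹ < 1 := conj_pow.symm.trans_lt (Left.pow_lt_one_of_lt h hk)
  simpa [mul_assoc] using mul_lt_mul_right hconj γ⁻¹

lemma one_lt_conj_of_cofinal (hcof : ∀ h : G, ∃ m n : ℤ, β ^ m ≤ h ∧ h ≤ β ^ n)
    (hβ : 1 < β) (γ : G) : 1 < γ * β * γ⁻¹ := by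
  by_contra! hle
  have hlt : γ * β * γ⁻¹ < 1 := hle.lt_of_ne (conj_eq_one_iff.not.mpr hβ.ne')
  obtain ⟨m, n, hm, hn⟩ := hcof γ⁻¹
  set k : ℕ := (n - m).toNat + 1
  have hstep : β ^ k * γ⁻¹ < γ⁻¹ :=
    pow_mul_inv_lt_inv_of_conj_lt_one hlt (n - m).toNat.succ_ne_zero
  have hkm : n < k + m := by omega
  have hbound : β ^ ((k : ℤ) + m) < β ^ n := calc
    β ^ ((k : ℤ) + m) = β ^ k * β ^ m := by rw [zpow_add, zpow_natCast]
    _ ≤ β ^ k * γ⁻¹ := mul_le_mul_right hm _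
    _ < γ⁻¹ := hstep
    _ ≤ β ^ n := hn
  exact hbound.not_gt (zpow_right_strictMono_of_one_lt hβ hkm)

end LeftOrderedGroup

/-- In a left-ordered group, if β is cofinal and 1 < β, then 1 < γ·β·γ⁻¹
for every γ. -/
theorem stmt_2 {G : Type*} [Group G] (r : G → G → Prop)
    (hord : IsStrictTotalOrder G r)
    (hinv : ∀ g a b : G, r a b → r (g * a) (g * b))
    (β : G)
    (hcof : ∀ h : G, ∃ m n : ℤ,
      (r (β ^ m) h ∨ β ^ m = h) ∧ (r h (β ^ n) ∨ h = β ^ n))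
    (hpos : r 1 β) :
    ∀ γ : G, r 1 (γ * β * γ⁻¹) := by
  classical
  let := linearOrderOfSTO r
  have : MulLeftStrictMono G := ⟨fun g _ _ h ↦ hinv g _ _ h⟩
  have := mulLeftMono_of_mulLeftStrictMono G
  refine one_lt_conj_of_cofinal (fun h ↦ ?_) hpos
  obtain ⟨m, n, hm, hn⟩ := hcof h
  exact ⟨m, n, hm.symm, hn.symm⟩
end

section
/- Let a and b be commuting orientation-preserving homeomorphisms of ℝ (equivalently, order-automorphisms of ℝ). Suppose a fixes some point x₀ ∈ ℝ and that no point of ℝ is fixed by both a and b. Then the orbit {bⁿ(x₀) : n ∈ ℤ} is unbounded above and unbounded below, and b has no fixed point in ℝ. -/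
/-!
The orbit `S = {bⁿ x₀}` is `b`-invariant, and since `a` commutes with `b` it fixes `S` pointwise.
An order automorphism preserving a nonempty set bounded above fixes its supremum, so if `S` were
bounded above, `sup S` would be a common fixed point of `a` and `b`; likewise for `inf S`.
Finally, a fixed point `x` of `b` is fixed by every `bⁿ`, so monotonicity keeps the whole orbit
on the same side of `x` as `x₀`, making it bounded on one side.
-/

open Set

namespace OrderIso

variable {α : Type*}

section LE

variable [LE α]

lemma zpow_apply_eq_self {b : α ≃o α} {x : α} (hx : b x = x) (n : ℤ) : (b ^ n) x = x :=
  MulAction.mem_fixedBy_zpow (α := α) (g := b) hx n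

lemma image_range_zpow_apply (b : α ≃o α) (x : α) :
    b '' range (fun n : ℤ => (b ^ n) x) = range (fun n : ℤ => (b ^ n) x) := by
  rw [← range_comp, ← (Equiv.addLeft (1 : ℤ)).surjective.range_comp (fun n : ℤ => (b ^ n) x)]
  congr 1
  ext n
  simp only [Function.comp_apply, Equiv.coe_addLeft, zpow_one_add, RelIso.mul_apply]

lemma apply_zpow_apply_eq_self_of_commute {a b : α ≃o α} (hab : Commute a b) {x : α}
    (hx : a x = x) (n : ℤ) : a ((b ^ n) x) = (b ^ n) x := by
  rw [← RelIso.mul_apply, (hab.zpow_right n).eq, RelIso.mul_apply, hx]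

end LE

section ConditionallyCompleteLattice

variable [ConditionallyCompleteLattice α]

lemma apply_csSup_eq_self_of_image_eq (f : α ≃o α) {s : Set α} (hs : f '' s = s)
    (hne : s.Nonempty) (hbdd : BddAbove s) : f (sSup s) = sSup s := by
  rw [f.map_csSup' hne hbdd, hs]

lemma apply_csInf_eq_self_of_image_eq (f : α ≃o α) {s : Set α} (hs : f '' s = s)
    (hne : s.Nonempty) (hbdd : BddBelow s) : f (sInf s) = sInf s := by
  rw [f.map_csInf' hne hbdd, hs]

variable {a b : α ≃o α} {x₀ : α}

lemma image_range_zpow_apply_of_commute (hab : Commute a b) (hx₀ : a x₀ = x₀) :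
    a '' range (fun n : ℤ => (b ^ n) x₀) = range (fun n : ℤ => (b ^ n) x₀) := by
  rw [← range_comp]
  exact congrArg range (funext (apply_zpow_apply_eq_self_of_commute hab hx₀))

lemma not_bddAbove_range_zpow_apply (hab : Commute a b) (hx₀ : a x₀ = x₀)
    (hnofix : ∀ x, a x = x → b x = x → False) :
    ¬ BddAbove (range fun n : ℤ => (b ^ n) x₀) := fun hbdd =>
  hnofix _ (a.apply_csSup_eq_self_of_image_eq (image_range_zpow_apply_of_commute hab hx₀)
      (range_nonempty _) hbdd)
    (b.apply_csSup_eq_self_of_image_eq (b.image_range_zpow_apply x₀) (range_nonempty _) hbdd)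

lemma not_bddBelow_range_zpow_apply (hab : Commute a b) (hx₀ : a x₀ = x₀)
    (hnofix : ∀ x, a x = x → b x = x → False) :
    ¬ BddBelow (range fun n : ℤ => (b ^ n) x₀) := fun hbdd =>
  hnofix _ (a.apply_csInf_eq_self_of_image_eq (image_range_zpow_apply_of_commute hab hx₀)
      (range_nonempty _) hbdd)
    (b.apply_csInf_eq_self_of_image_eq (b.image_range_zpow_apply x₀) (range_nonempty _) hbdd)

end ConditionallyCompleteLattice

lemma bddAbove_or_bddBelow_range_zpow_apply [LinearOrder α] {b : α ≃o α} {x : α} (hx : b x = x)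
    (x₀ : α) :
    BddAbove (range fun n : ℤ => (b ^ n) x₀) ∨ BddBelow (range fun n : ℤ => (b ^ n) x₀) := by
  rcases le_total x₀ x with h | h
  · refine .inl ⟨x, ?_⟩
    rintro _ ⟨n, rfl⟩
    simpa only [zpow_apply_eq_self hx n] using (b ^ n).monotone h
  · refine .inr ⟨x, ?_⟩
    rintro _ ⟨n, rfl⟩
    simpa only [zpow_apply_eq_self hx n] using (b ^ n).monotone h

end OrderIso

/-- If a and b are commuting orientation-preserving homeomorphisms
(order-automorphisms) of ℝ, a fixes x₀, and no point is fixed by both a and b,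
then the b-orbit of x₀ is unbounded above and below, and b is fixed-point free. -/
theorem stmt_3 (a b : ℝ ≃o ℝ) (hcomm : ∀ x : ℝ, a (b x) = b (a x))
    (x₀ : ℝ) (hfix : a x₀ = x₀)
    (hnofix : ∀ x : ℝ, a x = x → b x = x → False) :
    ¬ BddAbove (Set.range fun n : ℤ => (b ^ n) x₀) ∧
    ¬ BddBelow (Set.range fun n : ℤ => (b ^ n) x₀) ∧
    ∀ x : ℝ, b x ≠ x := by
  have hab : Commute a b := RelIso.ext hcomm
  have hA := OrderIso.not_bddAbove_range_zpow_apply hab hfix hnofix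
  have hB := OrderIso.not_bddBelow_range_zpow_apply hab hfix hnofix
  exact ⟨hA, hB, fun x hx => (OrderIso.bddAbove_or_bddBelow_range_zpow_apply hx x₀).elim hA hB⟩
end

section
/- Let G be a group, ρ : G → Homeo₊(ℝ) a group homomorphism, x₀ ∈ ℝ, and let α, β ∈ G be commuting elements such that ρ(α)(x₀) = x₀ and no point of ℝ is fixed by both ρ(α) and ρ(β). Let Stab = {g ∈ G : ρ(g)(x₀) = x₀} and suppose Stab admits a left-order (or is trivial). Then G admits a left-order < such that: (i) g₁ ≤ g₂ implies ρ(g₁)(x₀) ≤ ρ(g₂)(x₀); (ii) Stab is a <-convex subgroup of G; (iii) β is <-cofinal. -/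
/-!
Order `G` lexicographically: first by the position of the orbit point `ρ g x₀`, and, among
elements with the same orbit point (a coset of the stabilizer), by the given left-order of the
stabilizer. This is left-invariant because `ρ` acts by increasing maps, it makes the orbit map
monotone, and hence makes the stabilizer convex. The `β`-orbit of `x₀` is unbounded in both
directions: it is invariant under `ρ β` and, since `α` commutes with `β` and fixes `x₀`, fixed
pointwise by `ρ α`; so a supremum or infimum would be a common fixed point. Hence `β` is cofinal.
-/

section CommonFixedPoint

variable {X : Type*} [ConditionallyCompleteLattice X]

theorem OrderIso.map_csSup_of_image_eq (e : X ≃o X) {s : Set X} (hne : s.Nonempty)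
    (hbdd : BddAbove s) (hs : e '' s = s) : e (sSup s) = sSup s := by
  rw [e.map_csSup' hne hbdd, hs]

theorem OrderIso.map_csInf_of_image_eq (e : X ≃o X) {s : Set X} (hne : s.Nonempty)
    (hbdd : BddBelow s) (hs : e '' s = s) : e (sInf s) = sInf s := by
  rw [e.map_csInf' hne hbdd, hs]

theorem image_range_zpow_apply_right (b : X ≃o X) (x₀ : X) :
    b '' Set.range (fun n : ℤ => (b ^ n) x₀) = Set.range (fun n : ℤ => (b ^ n) x₀) := by
  rw [← Set.range_comp, ← (Equiv.addLeft (1 : ℤ)).surjective.range_comp (fun n : ℤ => (b ^ n) x₀)]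
  congr 1 with n
  simp [zpow_one_add, RelIso.mul_apply]

variable {a b : X ≃o X} {x₀ : X}

theorem image_range_zpow_apply_left (hab : Commute a b) (ha : a x₀ = x₀) :
    a '' Set.range (fun n : ℤ => (b ^ n) x₀) = Set.range (fun n : ℤ => (b ^ n) x₀) := by
  rw [← Set.range_comp]
  congr 1 with n
  rw [Function.comp_apply, ← RelIso.mul_apply, (hab.zpow_right n).eq, RelIso.mul_apply, ha]

theorem not_bddAbove_range_zpow_apply (hab : Commute a b) (ha : a x₀ = x₀)
    (hnofix : ∀ x, a x = x → b x = x → False) :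
    ¬ BddAbove (Set.range fun n : ℤ => (b ^ n) x₀) := fun hbdd =>
  hnofix _ (a.map_csSup_of_image_eq (Set.range_nonempty _) hbdd
    (image_range_zpow_apply_left hab ha))
    (b.map_csSup_of_image_eq (Set.range_nonempty _) hbdd (image_range_zpow_apply_right b x₀))

theorem not_bddBelow_range_zpow_apply (hab : Commute a b) (ha : a x₀ = x₀)
    (hnofix : ∀ x, a x = x → b x = x → False) :
    ¬ BddBelow (Set.range fun n : ℤ => (b ^ n) x₀) := fun hbdd =>
  hnofix _ (a.map_csInf_of_image_eq (Set.range_nonempty _) hbdd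
    (image_range_zpow_apply_left hab ha))
    (b.map_csInf_of_image_eq (Set.range_nonempty _) hbdd (image_range_zpow_apply_right b x₀))

end CommonFixedPoint

section OrbitLex

variable {G X : Type*} [Group G] [LinearOrder X]

def orbitLex (ρ : G →* (X ≃o X)) (x₀ : X) (P : Set G) (g h : G) : Prop :=
  ρ g x₀ < ρ h x₀ ∨ g⁻¹ * h ∈ P

variable {ρ : G →* (X ≃o X)} {x₀ : X} {P : Set G}

theorem apply_inv_mul_eq_self_iff {g h : G} : ρ (g⁻¹ * h) x₀ = x₀ ↔ ρ h x₀ = ρ g x₀ := by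
  rw [map_mul, map_inv, RelIso.mul_apply]
  exact (ρ g).symm_apply_eq

theorem apply_eq_of_inv_mul_mem (hfix : ∀ g ∈ P, ρ g x₀ = x₀) {g h : G} (hgh : g⁻¹ * h ∈ P) :
    ρ g x₀ = ρ h x₀ :=
  (apply_inv_mul_eq_self_iff.mp (hfix _ hgh)).symm

theorem orbitLex.mul_left {g a b : G} (hab : orbitLex ρ x₀ P a b) :
    orbitLex ρ x₀ P (g * a) (g * b) := by
  rcases hab with hab | hab
  · left
    simpa only [map_mul, RelIso.mul_apply] using (ρ g).strictMono hab
  · right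
    rwa [mul_inv_rev, mul_assoc, inv_mul_cancel_left]

theorem orbitLex.apply_le (hfix : ∀ g ∈ P, ρ g x₀ = x₀) {g h : G}
    (hgh : orbitLex ρ x₀ P g h ∨ g = h) : ρ g x₀ ≤ ρ h x₀ := by
  rcases hgh with (hgh | hgh) | rfl
  · exact hgh.le
  · exact (apply_eq_of_inv_mul_mem hfix hgh).le
  · exact le_rfl

theorem isStrictTotalOrder_orbitLex (hfix : ∀ g ∈ P, ρ g x₀ = x₀)
    (hmul : ∀ a ∈ P, ∀ b ∈ P, a * b ∈ P)
    (htri : ∀ g : G, ρ g x₀ = x₀ →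
      (g ∈ P ∧ g ≠ 1 ∧ g⁻¹ ∉ P) ∨ (g = 1 ∧ g ∉ P ∧ g⁻¹ ∉ P) ∨ (g⁻¹ ∈ P ∧ g ∉ P ∧ g ≠ 1)) :
    IsStrictTotalOrder G (orbitLex ρ x₀ P) := by
  have one_notMem : (1 : G) ∉ P := by
    rcases htri 1 (by simp) with ⟨-, h, -⟩ | ⟨-, h, -⟩ | ⟨-, -, h⟩ <;> simp_all
  refine { irrefl := ?irrefl, trans := ?trans, trichotomous := ?trichotomous }
  case irrefl =>
    rintro g (h | h)
    · exact lt_irrefl _ h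
    · exact one_notMem (by simpa using h)
  case trans =>
    rintro a b c (hab | hab) (hbc | hbc)
    · exact Or.inl (hab.trans hbc)
    · exact Or.inl (hab.trans_eq (apply_eq_of_inv_mul_mem hfix hbc))
    · exact Or.inl ((apply_eq_of_inv_mul_mem hfix hab).trans_lt hbc)
    · exact Or.inr (by simpa [mul_assoc] using hmul _ hab _ hbc)
  case trichotomous =>
    intro a b hab hba
    have heq : ρ a x₀ = ρ b x₀ :=
      le_antisymm (not_lt.mp fun h => hba (Or.inl h)) (not_lt.mp fun h => hab (Or.inl h))
    rcases htri _ (apply_inv_mul_eq_self_iff.mpr heq.symm) with ⟨h, -⟩ | ⟨h, -⟩ | ⟨h, -⟩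
    · exact absurd (Or.inr h) hab
    · exact inv_mul_eq_one.mp h
    · exact absurd (Or.inr (by simpa using h)) hba

end OrbitLex

/-- Let ρ : G → Homeo₊(ℝ) be a homomorphism, x₀ ∈ ℝ, and α, β commuting elements
with ρ(α)(x₀) = x₀ and no common fixed point of ρ(α) and ρ(β). If the stabilizer
of x₀ admits a left-order (expressed via a positive cone; this includes the trivial
case), then G admits a left-order < such that: (i) g₁ ≤ g₂ implies
ρ(g₁)(x₀) ≤ ρ(g₂)(x₀); (ii) the stabilizer is <-convex; (iii) β is <-cofinal. -/
theorem stmt_4 {G : Type*} [Group G] (ρ : G →* (ℝ ≃o ℝ)) (x₀ : ℝ)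
    (α β : G) (hcomm : α * β = β * α)
    (hfix : ρ α x₀ = x₀)
    (hnofix : ∀ x : ℝ, ρ α x = x → ρ β x = x → False)
    (hstab : ∃ P₀ : Set G, (∀ g ∈ P₀, ρ g x₀ = x₀) ∧
      (∀ a ∈ P₀, ∀ b ∈ P₀, a * b ∈ P₀) ∧
      (∀ g : G, ρ g x₀ = x₀ →
        (g ∈ P₀ ∧ g ≠ 1 ∧ g⁻¹ ∉ P₀) ∨ (g = 1 ∧ g ∉ P₀ ∧ g⁻¹ ∉ P₀) ∨
        (g⁻¹ ∈ P₀ ∧ g ∉ P₀ ∧ g ≠ 1))) :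
    ∃ r : G → G → Prop, IsStrictTotalOrder G r ∧
      (∀ g a b : G, r a b → r (g * a) (g * b)) ∧
      (∀ g₁ g₂ : G, (r g₁ g₂ ∨ g₁ = g₂) → ρ g₁ x₀ ≤ ρ g₂ x₀) ∧
      (∀ k h x : G, ρ k x₀ = x₀ → ρ h x₀ = x₀ → r k x → r x h → ρ x x₀ = x₀) ∧
      (∀ h : G, ∃ m n : ℤ,
        (r (β ^ m) h ∨ β ^ m = h) ∧ (r h (β ^ n) ∨ h = β ^ n)) := by
  obtain ⟨P, hPfix, hPmul, hPtri⟩ := hstab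
  have hρ : Commute (ρ α) (ρ β) := (show Commute α β from hcomm).map ρ
  refine ⟨orbitLex ρ x₀ P, isStrictTotalOrder_orbitLex hPfix hPmul hPtri,
    fun g a b => orbitLex.mul_left, fun g₁ g₂ => orbitLex.apply_le hPfix, ?_, ?_⟩
  · intro k h x hk hh hkx hxh
    exact le_antisymm ((orbitLex.apply_le hPfix (.inl hxh)).trans_eq hh)
      (hk.symm.trans_le (orbitLex.apply_le hPfix (.inl hkx)))
  · intro h
    obtain ⟨_, ⟨n, rfl⟩, hn⟩ :=
      not_bddAbove_iff.mp (not_bddAbove_range_zpow_apply hρ hfix hnofix) (ρ h x₀)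
    obtain ⟨_, ⟨m, rfl⟩, hm⟩ :=
      not_bddBelow_iff.mp (not_bddBelow_range_zpow_apply hρ hfix hnofix) (ρ h x₀)
    refine ⟨m, n, .inl (.inl ?_), .inl (.inl ?_)⟩ <;> simpa only [map_zpow]
end

section
/- Let D ∈ {2, 3, 4, 6} and let λ₁, λ₂ ∈ ℤ² be primitive vectors with |det(λ₁, λ₂)| = D, where det(λ₁, λ₂) denotes the determinant of the 2×2 integer matrix with rows λ₁ and λ₂. Then there exists a primitive vector α ∈ ℤ² with |det(α, λ₁)| = 1 and |det(α, λ₂)| = 1. -/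
/-!
Pick `β` with `det(β, λ₁) = 1`. The vectors `α = β + s λ₁` all satisfy `det(α, λ₁) = 1`, and
`det(α, λ₂) = c + s e` with `c = det(β, λ₂)` and `e = det(λ₁, λ₂)`; primitivity of `λ₂` makes `c` a
unit modulo `e`. For `|e| ∈ {2, 3, 4, 6}` the only units of `ℤ/e` are `±1`, so some `s` gives
`c + s e = ±1`.
-/

def det₂ (u v : ℤ × ℤ) : ℤ := u.1 * v.2 - u.2 * v.1

lemma det₂_add_smul (β l m : ℤ × ℤ) (s : ℤ) : det₂ (β + s • l) m = det₂ β m + s * det₂ l m := by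
  simp only [det₂, Prod.fst_add, Prod.snd_add, Prod.smul_fst, Prod.smul_snd, smul_eq_mul]
  ring

lemma det₂_add_smul_self (β l : ℤ × ℤ) (s : ℤ) : det₂ (β + s • l) l = det₂ β l := by
  rw [det₂_add_smul, show det₂ l l = 0 by simp only [det₂]; ring, mul_zero, add_zero]

lemma exists_det₂_eq_one {l : ℤ × ℤ} (hl : IsCoprime l.1 l.2) : ∃ β : ℤ × ℤ, det₂ β l = 1 := by
  obtain ⟨x, y, hxy⟩ := hl
  exact ⟨(y, -x), by simp only [det₂]; linear_combination hxy⟩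

lemma isCoprime_of_abs_det₂_eq_one {α l : ℤ × ℤ} (h : |det₂ α l| = 1) : IsCoprime α.1 α.2 := by
  have hsq : det₂ α l * det₂ α l = 1 := by rw [← abs_mul_abs_self, h, mul_one]
  exact ⟨det₂ α l * l.2, -(det₂ α l * l.1), by simp only [det₂] at hsq ⊢; linear_combination hsq⟩

/-- `(β, l₁)` is a basis of `ℤ²` with `l₂ = det₂ β l₂ • l₁ - det₂ l₁ l₂ • β`. -/
lemma isCoprime_det₂_of_det₂_eq_one {β l₁ l₂ : ℤ × ℤ} (hβ : det₂ β l₁ = 1)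
    (h₂ : IsCoprime l₂.1 l₂.2) : IsCoprime (det₂ β l₂) (det₂ l₁ l₂) := by
  obtain ⟨u, v, huv⟩ := h₂
  refine ⟨u * l₁.1 + v * l₁.2, -(u * β.1 + v * β.2), ?_⟩
  simp only [det₂] at hβ ⊢
  linear_combination (u * l₂.1 + v * l₂.2) * hβ + huv

lemma ZMod.eq_one_or_eq_neg_one_of_isUnit {n : ℕ} (hn : n ∈ ({2, 3, 4, 6} : Set ℕ)) {u : ZMod n}
    (hu : IsUnit u) : u = 1 ∨ u = -1 := by
  obtain ⟨v, rfl⟩ := hu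
  rcases hn with rfl | rfl | rfl | rfl <;> revert v <;> decide

lemma Int.exists_abs_add_mul_eq_one {c e : ℤ} (h : IsCoprime c e)
    (he : |e| ∈ ({2, 3, 4, 6} : Set ℤ)) : ∃ s : ℤ, |c + s * e| = 1 := by
  have hn : e.natAbs ∈ ({2, 3, 4, 6} : Set ℕ) := by
    rw [← Int.natCast_natAbs] at he
    simp only [Set.mem_insert_iff, Set.mem_singleton_iff] at he ⊢
    exact_mod_cast he
  have he0 : (e : ZMod e.natAbs) = 0 :=
    (ZMod.intCast_zmod_eq_zero_iff_dvd _ _).mpr Int.natAbs_dvd_self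
  have hunit : IsUnit (c : ZMod e.natAbs) := by
    have := h.map (Int.castRingHom (ZMod e.natAbs))
    rwa [eq_intCast, eq_intCast, he0, isCoprime_zero_right] at this
  obtain ⟨k, hk⟩ | ⟨k, hk⟩ : e ∣ 1 - c ∨ e ∣ -1 - c := by
    rw [← Int.natAbs_dvd (b := 1 - c), ← Int.natAbs_dvd (b := -1 - c),
      ← ZMod.intCast_eq_intCast_iff_dvd_sub, ← ZMod.intCast_eq_intCast_iff_dvd_sub]
    exact_mod_cast ZMod.eq_one_or_eq_neg_one_of_isUnit hn hunit
  · exact ⟨k, by rw [show c + k * e = 1 by linarith, abs_one]⟩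
  · exact ⟨k, by rw [show c + k * e = -1 by linarith, abs_neg, abs_one]⟩

/-- For D ∈ {2,3,4,6} and primitive vectors λ₁, λ₂ ∈ ℤ² with |det(λ₁, λ₂)| = D,
there is a primitive vector α ∈ ℤ² with |det(α, λ₁)| = 1 and |det(α, λ₂)| = 1. -/
theorem stmt_14 (D : ℤ) (hD : D ∈ ({2, 3, 4, 6} : Set ℤ))
    (l₁ l₂ : ℤ × ℤ) (h₁ : IsCoprime l₁.1 l₁.2) (h₂ : IsCoprime l₂.1 l₂.2)
    (hdet : |l₁.1 * l₂.2 - l₁.2 * l₂.1| = D) :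
    ∃ α : ℤ × ℤ, IsCoprime α.1 α.2 ∧
      |α.1 * l₁.2 - α.2 * l₁.1| = 1 ∧ |α.1 * l₂.2 - α.2 * l₂.1| = 1 := by
  obtain ⟨β, hβ⟩ := exists_det₂_eq_one h₁
  obtain ⟨s, hs⟩ := Int.exists_abs_add_mul_eq_one (isCoprime_det₂_of_det₂_eq_one hβ h₂)
    (hdet ▸ hD : |det₂ l₁ l₂| ∈ _)
  have hα₁ : |det₂ (β + s • l₁) l₁| = 1 := by rw [det₂_add_smul_self, hβ, abs_one]
  have hα₂ : |det₂ (β + s • l₁) l₂| = 1 := by rwa [det₂_add_smul]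
  exact ⟨β + s • l₁, isCoprime_of_abs_det₂_eq_one hα₁, hα₁, hα₂⟩
end
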